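/- Let $T, S \in \mathcal{G}$ and suppose for all $D_n \subset B_n$ with $\#D_n = o(n)$ one has $\lim_n \frac{1}{n}\sum_{e\in D_n}\|Te\|^2 = \lim_n \frac{1}{n}\sum_{e\in D_n}\|Se\|^2 = 0$. Then $\langle T, S\rangle_{\mathcal{G}} = \lim_{n\to\infty}\frac{1}{n}\sum_{e\in B_n}\langle Te, Se\rangle$, and in particular this limit exists. -/

import Mathlib

open Filter Finset MeasureTheory
open scoped ENNReal

noncomputable section

/-- The index set `I = (0,1] ∩ ℚ`. -/
abbrev Iq : Type := {q : ℚ // 0 < q ∧ q ≤ 1}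

/-- The Hilbert space `ℋ² = ⊕_{l ∈ I} H²[-π,π]`, realized via the orthonormal basis
`{e_{lk} : l ∈ I, k ∈ ℕ}` as `ℓ²(I × ℕ)`. -/
abbrev H2 : Type := lp (fun _ : Iq × ℕ => ℂ) 2

/-- The basis vector `e_{lk}` of `ℋ²` (zero if `l ∉ (0,1]`). -/
def basisVec (l : ℚ) (k : ℕ) : H2 :=
  if h : 0 < l ∧ l ≤ 1 then lp.single 2 ((⟨l, h⟩ : Iq), k) (1 : ℂ) else 0

/-- Index set for `Bₙ = {e_{lr} : r = 0,…,⌊n/⌊√n⌋⌋-1, l ∈ I_{⌊√n⌋}}`: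
pairs `(p, r)` with `1 ≤ p ≤ ⌊√n⌋` and `r < ⌊n/⌊√n⌋⌋`, where `l = p/⌊√n⌋`. -/
def Bfin (n : ℕ) : Finset (ℕ × ℕ) :=
  (Finset.Icc 1 (Nat.sqrt n)) ×ˢ (Finset.range (n / Nat.sqrt n))

/-- The basis vector of `Bₙ` indexed by `(p, r)`, namely `e_{p/⌊√n⌋, r}`. -/
def bvec (n : ℕ) (pr : ℕ × ℕ) : H2 :=
  basisVec ((pr.1 : ℚ) / (Nat.sqrt n : ℚ)) pr.2

/-- `∑_{e ∈ C} ‖Te‖²` for a subset `C` of the index set of `Bₙ`. -/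
def sumSq (T : H2 → H2) (n : ℕ) (C : Finset (ℕ × ℕ)) : ℝ :=
  ∑ pr ∈ C, ‖T (bvec n pr)‖ ^ 2

/-- The seminorm `Q(T) = inf { limsup_n (1/√n)(∑_{e ∈ Cₙ} ‖Te‖²)^{1/2} }`, the infimum
over all decompositions `Bₙ = Cₙ ⊔ Dₙ` with `#Dₙ = o(n)`, valued in `ℝ≥0∞`. -/
def QQ (T : H2 → H2) : ℝ≥0∞ :=
  ⨅ (C : ℕ → Finset (ℕ × ℕ)) (_ : ∀ n, C n ⊆ Bfin n)
    (_ : Tendsto (fun n => ((Bfin n \ C n).card : ℝ) / n) atTop (nhds 0)),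
    Filter.limsup (fun n => ENNReal.ofReal (Real.sqrt (sumSq T n (C n) / n))) atTop

/-- `T` acts like the operator `T_{jk}`:
`T(e_{lr}) = e^{2πijl} e_{l,r+k}` when `r + k ≥ 0`, and `0` otherwise. -/
def IsTjk (T : H2 → H2) (j k : ℤ) : Prop :=
  ∀ (l : ℚ) (r : ℕ), T (basisVec l r) =
    if 0 ≤ (r : ℤ) + k then
      Complex.exp (2 * Real.pi * Complex.I * (j : ℂ) * (l : ℂ)) • basisVec l ((r : ℤ) + k).toNat
    else 0

/-- The span `E` of the operators `T_{jk}`, `j,k ∈ ℤ`. -/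
def spanE : Submodule ℂ (H2 →ₗ[ℂ] H2) :=
  Submodule.span ℂ {S : H2 →ₗ[ℂ] H2 | ∃ j k : ℤ, IsTjk ⇑S j k}

/-- `T` belongs to `𝒢`, the `Q`-closure of the span of the `T_{jk}`. -/
def InG (T : H2 →ₗ[ℂ] H2) : Prop :=
  ∀ ε : ℝ≥0∞, 0 < ε → ∃ S ∈ spanE, QQ ⇑(T - S) < ε

/-- `(1/n) ∑_{e ∈ Dₙ} ‖Te‖² → 0` for every choice of `Dₙ ⊆ Bₙ` with `#Dₙ = o(n)`. -/
def NegligibleOn (T : H2 →ₗ[ℂ] H2) : Prop :=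
  ∀ D : ℕ → Finset (ℕ × ℕ), (∀ n, D n ⊆ Bfin n) →
    Tendsto (fun n => ((D n).card : ℝ) / n) atTop (nhds 0) →
    Tendsto (fun n => sumSq ⇑T n (D n) / n) atTop (nhds 0)

/-!
Put `v_n(T) = (n^{-1/2} T e)_{e ∈ Bₙ} ∈ ℓ²(Bₙ, ℋ²)`. Then
`(1/n) ∑_{e ∈ Bₙ} ⟨Te, Se⟩ = ⟨v_n T, v_n S⟩`, so by polarization it suffices to show
`‖v_n R‖ → Q(R)` for `R = T + iᵏS`, which again lies in `𝒢` and is negligible on `o(n)`-subsets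
of `Bₙ`.

For such `R` the infimum defining `Q(R)` is attained at `Cₙ = Bₙ`, so `Q(R) = limsup ‖v_n R‖`.
For generators, `⟨T_{jk} e, T_{j'k'} e⟩` vanishes unless `k = k'`, and otherwise summing
`e^{2πi(j-j')l}` over `l ∈ I_{⌊√n⌋}` gives `0` as soon as `⌊√n⌋ > |j - j'|`; hence `‖v_n S₀‖`
converges for every `S₀ ∈ E`. Since `|‖v_n R‖ - ‖v_n S₀‖| ≤ ‖v_n (R - S₀)‖`, whose limsup is
`Q(R - S₀)`, approximating `R` by `S₀ ∈ E` shows that `‖v_n R‖` is Cauchy.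
-/

open Complex
open scoped Real

theorem inner_eq_quarter_sum_I_pow {E : Type*} [NormedAddCommGroup E] [InnerProductSpace ℂ E]
    (x y : E) :
    inner ℂ x y = 1 / 4 * ∑ k ∈ range 4, I ^ k * ((‖y + I ^ k • x‖ ^ 2 : ℝ) : ℂ) := by
  have hI : ∀ k : ℕ, ‖y + I ^ k • x‖ ^ 2 = ‖y‖ ^ 2 + 2 * (I ^ k * inner ℂ y x).re + ‖x‖ ^ 2 := by
    intro k
    rw [@norm_add_sq ℂ, inner_smul_right, norm_smul, norm_pow, norm_I, one_pow, one_mul]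
    rfl
  simp only [hI, sum_range_succ, range_zero, sum_empty]
  rw [← inner_conj_symm]
  generalize inner ℂ y x = z
  apply Complex.ext <;> simp [pow_succ] <;> ring

lemma sum_Icc_exp_eq_zero {d : ℤ} {m : ℕ} (hd : ¬ (m : ℤ) ∣ d) :
    ∑ p ∈ Icc 1 m, exp (2 * π * I * d * (p / m)) = 0 := by
  rcases Nat.eq_zero_or_pos m with rfl | hm
  · simp
  have hm' : (m : ℂ) ≠ 0 := by exact_mod_cast hm.ne'
  set ζ := exp (2 * π * I * d / m)
  have hpow (p : ℕ) : exp (2 * π * I * d * (p / m)) = ζ ^ p := by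
    rw [← Complex.exp_nat_mul]; ring_nf
  have hζm : ζ ^ m = 1 := by
    rw [← Complex.exp_nat_mul, ← exp_int_mul_two_pi_mul_I d]
    congr 1
    field_simp
  have hζ1 : ζ ≠ 1 := by
    rw [Ne, Complex.exp_eq_one_iff]
    rintro ⟨t, ht⟩
    field_simp at ht
    exact hd ⟨t, by exact_mod_cast ht⟩
  rw [Finset.sum_congr rfl fun p _ => hpow p, ← Finset.Ico_add_one_right_eq_Icc,
    Finset.sum_Ico_eq_sum_range]
  simp only [pow_add, pow_one, ← Finset.mul_sum, Nat.add_sub_cancel, geom_sum_eq hζ1, hζm]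
  simp

-- Mathlib's `ENNReal.limsup_add_le` needs a `CountableInterFilter`, which excludes `atTop`.
lemma ENNReal.limsup_add_le_add {ι : Type*} {f : Filter ι} (u v : ι → ℝ≥0∞) :
    limsup (u + v) f ≤ limsup u f + limsup v f := by
  rw [← ENNReal.iInf_gt_eq_self (limsup u f), ← ENNReal.iInf_gt_eq_self (limsup v f)]
  refine ENNReal.le_iInf₂_add_iInf₂ fun a ha b hb => limsup_le_of_le (by isBoundedDefault) ?_
  filter_upwards [eventually_lt_of_limsup_lt ha, eventually_lt_of_limsup_lt hb] with x hu hv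
  exact add_le_add hu.le hv.le

lemma cauchySeq_of_forall_eventually_dist_lt {α : Type*} [PseudoMetricSpace α] {f : ℕ → α}
    (h : ∀ ε > 0, ∃ g : ℕ → α, CauchySeq g ∧ ∀ᶠ n in atTop, dist (f n) (g n) < ε) :
    CauchySeq f := by
  refine Metric.cauchySeq_iff.mpr fun ε hε => ?_
  obtain ⟨g, hg, hfg⟩ := h (ε / 3) (by positivity)
  obtain ⟨N₁, hN₁⟩ := Metric.cauchySeq_iff.mp hg (ε / 3) (by positivity)
  obtain ⟨N₂, hN₂⟩ := eventually_atTop.mp hfg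
  refine ⟨max N₁ N₂, fun m hm n hn => ?_⟩
  rw [ge_iff_le, max_le_iff] at hm hn
  calc dist (f m) (f n) ≤ dist (f m) (g m) + dist (g m) (g n) + dist (g n) (f n) :=
        dist_triangle4 _ _ _ _
    _ < ε / 3 + ε / 3 + ε / 3 := by
        gcongr
        exacts [hN₂ m hm.2, hN₁ m hm.1 n hn.1, dist_comm (f n) (g n) ▸ hN₂ n hn.2]
    _ = ε := by ring

lemma tendsto_nat_sqrt_atTop : Tendsto Nat.sqrt atTop atTop :=
  tendsto_atTop_atTop.mpr fun b => ⟨b * b, fun _ hn => Nat.le_sqrt.mpr hn⟩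

lemma tendsto_nat_sqrt_div_atTop : Tendsto (fun n : ℕ => (Nat.sqrt n : ℝ) / n) atTop (nhds 0) := by
  have h : Tendsto (fun n : ℕ => (√(n : ℝ))⁻¹) atTop (nhds 0) :=
    tendsto_inv_atTop_zero.comp (Real.tendsto_sqrt_atTop.comp tendsto_natCast_atTop_atTop)
  refine squeeze_zero (fun n => by positivity) (fun n => ?_) h
  rw [← Real.sqrt_div_self]
  gcongr
  exact Real.nat_sqrt_le_real_sqrt

lemma le_nat_sqrt_mul_card_filter (k : ℤ) (n : ℕ) :
    n ≤ Nat.sqrt n *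
      (#((range (n / Nat.sqrt n)).filter fun r : ℕ => 0 ≤ (r : ℤ) + k) + k.natAbs + 1) := by
  rcases Nat.eq_zero_or_pos n with rfl | hn
  · simp
  have hsplit := Finset.card_filter_add_card_filter_not (s := range (n / Nat.sqrt n))
    (p := fun r : ℕ => 0 ≤ (r : ℤ) + k)
  have hneg : #((range (n / Nat.sqrt n)).filter fun r : ℕ => ¬ 0 ≤ (r : ℤ) + k) ≤ k.natAbs :=
    (Finset.card_le_card fun r hr => by
      simp only [Finset.mem_filter, Finset.mem_range] at hr ⊢; omega).trans_eq
      (Finset.card_range _)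
  rw [Finset.card_range] at hsplit
  calc n ≤ Nat.sqrt n * (n / Nat.sqrt n + 1) := (Nat.lt_mul_div_succ n (Nat.sqrt_pos.mpr hn)).le
    _ ≤ _ := by gcongr; omega

lemma tendsto_nat_sqrt_mul_card_filter_div (k : ℤ) :
    Tendsto (fun n : ℕ => (Nat.sqrt n *
      #((range (n / Nat.sqrt n)).filter fun r : ℕ => 0 ≤ (r : ℤ) + k) : ℝ) / n) atTop (nhds 1) := by
  have hlower :
      Tendsto (fun n : ℕ => 1 - (k.natAbs + 1) * ((Nat.sqrt n : ℝ) / n)) atTop (nhds 1) := by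
    simpa using (tendsto_nat_sqrt_div_atTop.const_mul ((k.natAbs : ℝ) + 1)).const_sub 1
  refine tendsto_of_tendsto_of_tendsto_of_le_of_le' hlower tendsto_const_nhds ?_
    (Eventually.of_forall fun n => div_le_one_of_le₀ ?_ n.cast_nonneg)
  · filter_upwards [eventually_gt_atTop 0] with n hn
    have hn' : (0 : ℝ) < n := by exact_mod_cast hn
    have h : (n : ℝ) ≤ Nat.sqrt n *
        (#((range (n / Nat.sqrt n)).filter fun r : ℕ => 0 ≤ (r : ℤ) + k) + k.natAbs + 1) := by
      exact_mod_cast le_nat_sqrt_mul_card_filter k n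
    rw [le_div_iff₀ hn', sub_mul, mul_assoc, div_mul_cancel₀ _ hn'.ne']
    linarith
  · norm_cast
    calc Nat.sqrt n * #((range (n / Nat.sqrt n)).filter fun r : ℕ => 0 ≤ (r : ℤ) + k)
        ≤ Nat.sqrt n * (n / Nat.sqrt n) := by
          gcongr; exact (Finset.card_filter_le _ _).trans_eq (Finset.card_range _)
      _ ≤ n := Nat.mul_div_le n _

lemma norm_basisVec_le (l : ℚ) (r : ℕ) : ‖basisVec l r‖ ≤ 1 := by
  unfold basisVec
  split_ifs <;> simp [lp.norm_single]

lemma inner_basisVec_basisVec {l : ℚ} (hl : 0 < l ∧ l ≤ 1) (a b : ℕ) :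
    inner ℂ (basisVec l a) (basisVec l b) = if a = b then 1 else 0 := by
  classical
  rw [basisVec, dif_pos hl, lp.inner_single_left, basisVec, dif_pos hl, lp.single_apply]
  by_cases h : a = b <;> simp [h]

lemma norm_apply_basisVec_le_of_isTjk {T : H2 → H2} {j k : ℤ} (hT : IsTjk T j k) (l : ℚ) (r : ℕ) :
    ‖T (basisVec l r)‖ ≤ 1 := by
  rw [hT]
  split_ifs
  · rw [norm_smul, show 2 * π * I * j * l = ((2 * π * j * l : ℝ) : ℂ) * I by push_cast; ring,
      norm_exp_ofReal_mul_I, one_mul]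
    exact norm_basisVec_le _ _
  · simp

lemma inner_apply_basisVec_of_isTjk {T₁ T₂ : H2 → H2} {j₁ k₁ j₂ k₂ : ℤ}
    (h₁ : IsTjk T₁ j₁ k₁) (h₂ : IsTjk T₂ j₂ k₂) {l : ℚ} (hl : 0 < l ∧ l ≤ 1) (r : ℕ) :
    inner ℂ (T₂ (basisVec l r)) (T₁ (basisVec l r)) =
      if k₂ = k₁ ∧ 0 ≤ (r : ℤ) + k₁ then exp (2 * π * I * (j₁ - j₂) * l) else 0 := by
  rw [h₁ l r, h₂ l r]
  by_cases hr₁ : 0 ≤ (r : ℤ) + k₁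
  · by_cases hr₂ : 0 ≤ (r : ℤ) + k₂
    · have hk : ((r : ℤ) + k₂).toNat = ((r : ℤ) + k₁).toNat ↔ k₂ = k₁ := by omega
      rw [if_pos hr₁, if_pos hr₂, inner_smul_left, inner_smul_right,
        inner_basisVec_basisVec hl, ← exp_conj]
      simp only [hk, hr₁, and_true]
      split_ifs
      · rw [mul_one, ← Complex.exp_add]
        congr 1
        simp only [map_mul, map_ofNat, conj_ofReal, conj_I, map_intCast, map_ratCast]
        ring
      · simp
    · simp [hr₂, show k₂ ≠ k₁ by omega]
  · simp [hr₁]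

def sampleVec (n : ℕ) (C : Finset (ℕ × ℕ)) :
    (H2 →ₗ[ℂ] H2) →ₗ[ℂ] PiLp 2 (fun _ : C => H2) where
  toFun T := WithLp.toLp 2 fun e => (((√n)⁻¹ : ℝ) : ℂ) • T (bvec n e)
  map_add' _ _ := by ext; simp [smul_add]
  map_smul' c _ := by ext; simp [smul_comm _ c]

section sampleVec

variable {n : ℕ} {C C' : Finset (ℕ × ℕ)} {S T : H2 →ₗ[ℂ] H2}

lemma norm_sampleVec_sq : ‖sampleVec n C T‖ ^ 2 = sumSq ⇑T n C / n := by
  rw [PiLp.norm_sq_eq_of_L2, sumSq, Finset.sum_div, ← Finset.sum_coe_sort C]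
  refine Finset.sum_congr rfl fun e _ => ?_
  simp [sampleVec, norm_smul, mul_pow, div_eq_inv_mul]

lemma norm_sampleVec : ‖sampleVec n C T‖ = √(sumSq ⇑T n C / n) := by
  rw [← norm_sampleVec_sq, Real.sqrt_sq (norm_nonneg _)]

lemma inner_sampleVec :
    inner ℂ (sampleVec n C S) (sampleVec n C T) =
      1 / n * ∑ e ∈ C, inner ℂ (S (bvec n e)) (T (bvec n e)) := by
  rw [PiLp.inner_apply, Finset.mul_sum, ← Finset.sum_coe_sort C]
  refine Finset.sum_congr rfl fun e _ => ?_
  simp only [sampleVec, LinearMap.coe_mk, AddHom.coe_mk, inner_smul_left, inner_smul_right,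
    Complex.conj_ofReal, ← mul_assoc, ← Complex.ofReal_mul, ← mul_inv,
    Real.mul_self_sqrt (Nat.cast_nonneg n)]
  simp

lemma norm_sampleVec_mono (h : C ⊆ C') : ‖sampleVec n C T‖ ≤ ‖sampleVec n C' T‖ := by
  rw [norm_sampleVec, norm_sampleVec]
  gcongr
  exact Finset.sum_le_sum_of_subset_of_nonneg h fun _ _ _ => sq_nonneg _

lemma norm_sampleVec_le_add_sdiff (h : C ⊆ C') :
    ‖sampleVec n C' T‖ ≤ ‖sampleVec n C T‖ + ‖sampleVec n (C' \ C) T‖ := by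
  have hsplit : ‖sampleVec n C' T‖ ^ 2 =
      ‖sampleVec n C T‖ ^ 2 + ‖sampleVec n (C' \ C) T‖ ^ 2 := by
    simp only [norm_sampleVec_sq, sumSq, ← add_div, add_comm (∑ e ∈ C, _), Finset.sum_sdiff h]
  refine le_of_sq_le_sq ?_ (by positivity)
  nlinarith [norm_nonneg (sampleVec n C T), norm_nonneg (sampleVec n (C' \ C) T)]

end sampleVec

lemma inner_sampleVec_of_isTjk {T₁ T₂ : H2 →ₗ[ℂ] H2} {j₁ k₁ j₂ k₂ : ℤ}
    (h₁ : IsTjk ⇑T₁ j₁ k₁) (h₂ : IsTjk ⇑T₂ j₂ k₂) (n : ℕ) :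
    inner ℂ (sampleVec n (Bfin n) T₂) (sampleVec n (Bfin n) T₁) =
      1 / n * ((∑ p ∈ Icc 1 (Nat.sqrt n), exp (2 * π * I * (j₁ - j₂) * (p / Nat.sqrt n))) *
        #((range (n / Nat.sqrt n)).filter fun r : ℕ => k₂ = k₁ ∧ 0 ≤ (r : ℤ) + k₁)) := by
  rw [inner_sampleVec, Bfin, Finset.sum_product, Finset.sum_mul]
  congr 1
  refine Finset.sum_congr rfl fun p hp => ?_
  obtain ⟨hp₁, hp₂⟩ := Finset.mem_Icc.mp hp
  have hl : 0 < (p / Nat.sqrt n : ℚ) ∧ (p / Nat.sqrt n : ℚ) ≤ 1 :=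
    ⟨div_pos (by exact_mod_cast hp₁) (by exact_mod_cast hp₁.trans hp₂),
      div_le_one_of_le₀ (by exact_mod_cast hp₂) (by positivity)⟩
  simp only [bvec, inner_apply_basisVec_of_isTjk h₁ h₂ hl, ← Finset.sum_filter,
    Finset.sum_const, nsmul_eq_mul]
  push_cast
  ring

lemma cauchySeq_inner_sampleVec_of_isTjk {T₁ T₂ : H2 →ₗ[ℂ] H2} {j₁ k₁ j₂ k₂ : ℤ}
    (h₁ : IsTjk ⇑T₁ j₁ k₁) (h₂ : IsTjk ⇑T₂ j₂ k₂) :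
    CauchySeq fun n => inner ℂ (sampleVec n (Bfin n) T₂) (sampleVec n (Bfin n) T₁) := by
  simp only [inner_sampleVec_of_isTjk h₁ h₂]
  by_cases hk : k₂ = k₁
  swap
  · simpa [hk] using cauchySeq_const (β := ℕ) (0 : ℂ)
  subst hk
  by_cases hj : j₁ = j₂
  · subst hj
    refine Tendsto.cauchySeq ((tendsto_nat_sqrt_mul_card_filter_div k₂).ofReal.congr fun n => ?_)
    simp only [sub_self, mul_zero, zero_mul, exp_zero, sum_const, Nat.card_Icc,
      add_tsub_cancel_right, nsmul_eq_mul, mul_one, true_and]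
    push_cast
    ring
  · refine Tendsto.cauchySeq ((tendsto_const_nhds (x := (0 : ℂ))).congr' ?_)
    filter_upwards [tendsto_nat_sqrt_atTop.eventually_gt_atTop (j₁ - j₂).natAbs] with n hn
    have hndvd : ¬ ((Nat.sqrt n : ℕ) : ℤ) ∣ (j₁ - j₂) := fun hdvd =>
      sub_ne_zero.mpr hj (Int.eq_zero_of_dvd_of_natAbs_lt_natAbs hdvd (by simpa using hn))
    have := sum_Icc_exp_eq_zero hndvd
    push_cast at this
    simp [this]

lemma cauchySeq_inner_sampleVec {S T : H2 →ₗ[ℂ] H2} (hS : S ∈ spanE) (hT : T ∈ spanE) :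
    CauchySeq fun n => inner ℂ (sampleVec n (Bfin n) S) (sampleVec n (Bfin n) T) := by
  induction hT using Submodule.span_induction with
  | mem T hT =>
    obtain ⟨j₁, k₁, hT⟩ := hT
    induction hS using Submodule.span_induction with
    | mem S hS =>
      obtain ⟨j₂, k₂, hS⟩ := hS
      exact cauchySeq_inner_sampleVec_of_isTjk hT hS
    | zero => simpa using cauchySeq_const (β := ℕ) (0 : ℂ)
    | add S₁ S₂ _ _ h₁ h₂ =>
      simp only [map_add, inner_add_left]
      exact h₁.add h₂
    | smul c S _ h =>
      simp only [map_smul, inner_smul_left]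
      exact (uniformContinuous_const_smul ((starRingEnd ℂ) c)).comp_cauchySeq h
  | zero => simpa using cauchySeq_const (β := ℕ) (0 : ℂ)
  | add T₁ T₂ _ _ h₁ h₂ =>
    simp only [map_add, inner_add_right]
    exact h₁.add h₂
  | smul c T _ h =>
    simp only [map_smul, inner_smul_right]
    exact (uniformContinuous_const_smul c).comp_cauchySeq h

lemma cauchySeq_norm_sampleVec_of_mem_spanE {S : H2 →ₗ[ℂ] H2} (hS : S ∈ spanE) :
    CauchySeq fun n => ‖sampleVec n (Bfin n) S‖ := by
  obtain ⟨z, hz⟩ := cauchySeq_tendsto_of_complete (cauchySeq_inner_sampleVec hS hS)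
  have hsq : Tendsto (fun n => ‖sampleVec n (Bfin n) S‖ ^ 2) atTop (nhds (RCLike.re z)) := by
    simpa only [Function.comp_def, inner_self_eq_norm_sq] using
      (RCLike.continuous_re.tendsto z).comp hz
  simpa [Real.sqrt_sq] using hsq.sqrt.cauchySeq

lemma negligibleOn_iff {T : H2 →ₗ[ℂ] H2} :
    NegligibleOn T ↔ ∀ D : ℕ → Finset (ℕ × ℕ), (∀ n, D n ⊆ Bfin n) →
      Tendsto (fun n => ((D n).card : ℝ) / n) atTop (nhds 0) →
      Tendsto (fun n => ‖sampleVec n (D n) T‖) atTop (nhds 0) := by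
  simp only [NegligibleOn, ← norm_sampleVec_sq]
  refine forall₃_congr fun D _ _ => ⟨fun h => ?_, fun h => by simpa using h.pow 2⟩
  simpa [Real.sqrt_sq] using h.sqrt

lemma NegligibleOn.add {A B : H2 →ₗ[ℂ] H2} (hA : NegligibleOn A) (hB : NegligibleOn B) :
    NegligibleOn (A + B) := by
  rw [negligibleOn_iff] at *
  refine fun D hD hcard => squeeze_zero (fun _ => norm_nonneg _) (fun n => ?_)
    (by simpa using (hA D hD hcard).add (hB D hD hcard))
  rw [map_add]
  exact norm_add_le _ _

lemma NegligibleOn.smul {A : H2 →ₗ[ℂ] H2} (c : ℂ) (hA : NegligibleOn A) :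
    NegligibleOn (c • A) := by
  rw [negligibleOn_iff] at *
  intro D hD hcard
  simpa [norm_smul] using (hA D hD hcard).const_mul ‖c‖

def negligibleSubmodule : Submodule ℂ (H2 →ₗ[ℂ] H2) where
  carrier := {T | NegligibleOn T}
  zero_mem' := by simp [negligibleOn_iff]
  add_mem' := NegligibleOn.add
  smul_mem' c _ h := h.smul c

lemma negligibleOn_of_norm_apply_basisVec_le {T : H2 →ₗ[ℂ] H2} {K : ℝ}
    (hT : ∀ l r, ‖T (basisVec l r)‖ ≤ K) : NegligibleOn T := by
  intro D _ hcard
  refine squeeze_zero (fun n => by unfold sumSq; positivity) (fun n => ?_)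
    (by simpa using hcard.const_mul (K ^ 2))
  rw [mul_div_assoc', sumSq]
  gcongr
  calc ∑ e ∈ D n, ‖T (bvec n e)‖ ^ 2 ≤ ∑ _e ∈ D n, K ^ 2 := by
        gcongr with e
        exact hT _ _
    _ = K ^ 2 * (D n).card := by rw [Finset.sum_const, nsmul_eq_mul, mul_comm]

lemma spanE_le_negligibleSubmodule : spanE ≤ negligibleSubmodule :=
  Submodule.span_le.mpr fun _ ⟨_, _, hT⟩ =>
    negligibleOn_of_norm_apply_basisVec_le (norm_apply_basisVec_le_of_isTjk hT)

def IsDensityOne (C : ℕ → Finset (ℕ × ℕ)) : Prop :=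
  (∀ n, C n ⊆ Bfin n) ∧ Tendsto (fun n => ((Bfin n \ C n).card : ℝ) / n) atTop (nhds 0)

lemma isDensityOne_Bfin : IsDensityOne Bfin :=
  ⟨fun _ => subset_rfl, by simp⟩

lemma IsDensityOne.inter {C₁ C₂ : ℕ → Finset (ℕ × ℕ)} (h₁ : IsDensityOne C₁)
    (h₂ : IsDensityOne C₂) : IsDensityOne fun n => C₁ n ∩ C₂ n := by
  refine ⟨fun n => Finset.inter_subset_left.trans (h₁.1 n), ?_⟩
  refine squeeze_zero (fun n => by positivity) (fun n => ?_) (by simpa using h₁.2.add h₂.2)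
  rw [← add_div, Finset.sdiff_inter_distrib_right]
  gcongr
  exact_mod_cast Finset.card_union_le _ _

lemma QQ_eq_iInf (T : H2 →ₗ[ℂ] H2) :
    QQ ⇑T = ⨅ C : {C // IsDensityOne C}, limsup (fun n => ‖sampleVec n (C.1 n) T‖ₑ) atTop := by
  simp only [QQ, IsDensityOne, iInf_subtype, iInf_and, ← norm_sampleVec, ofReal_norm]

lemma QQ_add_le (A B : H2 →ₗ[ℂ] H2) : QQ ⇑(A + B) ≤ QQ ⇑A + QQ ⇑B := by
  simp only [QQ_eq_iInf]
  refine ENNReal.le_iInf_add_iInf fun C₁ C₂ => (iInf_le _ ⟨_, C₁.2.inter C₂.2⟩).trans ?_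
  refine (limsup_le_limsup (Eventually.of_forall fun n => ?_)).trans
    (ENNReal.limsup_add_le_add _ _)
  rw [map_add]
  refine (enorm_add_le _ _).trans (add_le_add ?_ ?_) <;>
    exact enorm_le_iff_norm_le.mpr (norm_sampleVec_mono (by simp))

lemma QQ_smul_of_norm_eq_one {c : ℂ} (hc : ‖c‖ = 1) (A : H2 →ₗ[ℂ] H2) :
    QQ ⇑(c • A) = QQ ⇑A := by
  have hc' : ‖c‖ₑ = 1 := by rw [← ofReal_norm, hc, ENNReal.ofReal_one]
  simp only [QQ_eq_iInf, map_smul, enorm_smul, hc', one_mul]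

lemma InG.add {A B : H2 →ₗ[ℂ] H2} (hA : InG A) (hB : InG B) : InG (A + B) := by
  intro ε hε
  obtain ⟨A₀, hA₀, hA⟩ := hA (ε / 2) (ENNReal.half_pos hε.ne')
  obtain ⟨B₀, hB₀, hB⟩ := hB (ε / 2) (ENNReal.half_pos hε.ne')
  refine ⟨A₀ + B₀, add_mem hA₀ hB₀, ?_⟩
  calc QQ ⇑(A + B - (A₀ + B₀)) = QQ ⇑((A - A₀) + (B - B₀)) := by rw [add_sub_add_comm]
    _ ≤ QQ ⇑(A - A₀) + QQ ⇑(B - B₀) := QQ_add_le _ _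
    _ < ε / 2 + ε / 2 := ENNReal.add_lt_add hA hB
    _ = ε := ENNReal.add_halves ε

lemma InG.smul_of_norm_eq_one {A : H2 →ₗ[ℂ] H2} (hA : InG A) {c : ℂ} (hc : ‖c‖ = 1) :
    InG (c • A) := by
  intro ε hε
  obtain ⟨A₀, hA₀, hA⟩ := hA ε hε
  exact ⟨c • A₀, Submodule.smul_mem _ c hA₀, by rwa [← smul_sub, QQ_smul_of_norm_eq_one hc]⟩

lemma QQ_eq_limsup_of_negligibleOn {T : H2 →ₗ[ℂ] H2} (hT : NegligibleOn T) :
    QQ ⇑T = limsup (fun n => ‖sampleVec n (Bfin n) T‖ₑ) atTop := by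
  rw [QQ_eq_iInf]
  refine le_antisymm (iInf_le_of_le ⟨Bfin, isDensityOne_Bfin⟩ le_rfl) (le_iInf fun C => ?_)
  have hrest : Tendsto (fun n => ‖sampleVec n (Bfin n \ C.1 n) T‖ₑ) atTop (nhds 0) := by
    simpa [← ofReal_norm] using
      ENNReal.tendsto_ofReal (negligibleOn_iff.mp hT _ (fun n => sdiff_subset) C.2.2)
  refine le_trans ?_ (ENNReal.limsup_add_of_right_tendsto_zero hrest _).le
  refine limsup_le_limsup (Eventually.of_forall fun n => ?_)
  simp only [Pi.add_apply, ← ofReal_norm, ← ENNReal.ofReal_add (norm_nonneg _) (norm_nonneg _)]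
  exact ENNReal.ofReal_le_ofReal (norm_sampleVec_le_add_sdiff (C.2.1 n))

lemma cauchySeq_norm_sampleVec {R : H2 →ₗ[ℂ] H2} (hG : InG R) (hN : NegligibleOn R) :
    CauchySeq fun n => ‖sampleVec n (Bfin n) R‖ := by
  refine cauchySeq_of_forall_eventually_dist_lt fun ε hε => ?_
  obtain ⟨S, hS, hQ⟩ := hG (ENNReal.ofReal ε) (ENNReal.ofReal_pos.mpr hε)
  have hRS : NegligibleOn (R - S) := sub_mem (show R ∈ negligibleSubmodule from hN)
    (spanE_le_negligibleSubmodule hS)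
  rw [QQ_eq_limsup_of_negligibleOn hRS] at hQ
  refine ⟨_, cauchySeq_norm_sampleVec_of_mem_spanE hS, ?_⟩
  filter_upwards [eventually_lt_of_limsup_lt hQ] with n hn
  calc dist ‖sampleVec n (Bfin n) R‖ ‖sampleVec n (Bfin n) S‖
      ≤ ‖sampleVec n (Bfin n) (R - S)‖ := by
        rw [map_sub]; exact abs_norm_sub_norm_le _ _
    _ < ε := by rwa [← ofReal_norm, ENNReal.ofReal_lt_ofReal_iff hε] at hn

lemma tendsto_norm_sampleVec_QQ {R : H2 →ₗ[ℂ] H2} (hG : InG R) (hN : NegligibleOn R) :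
    Tendsto (fun n => ‖sampleVec n (Bfin n) R‖) atTop (nhds (QQ ⇑R).toReal) := by
  obtain ⟨L, hL⟩ := cauchySeq_tendsto_of_complete (cauchySeq_norm_sampleVec hG hN)
  have hQ : QQ ⇑R = ENNReal.ofReal L := by
    rw [QQ_eq_limsup_of_negligibleOn hN]
    simpa [ofReal_norm] using (ENNReal.tendsto_ofReal hL).limsup_eq
  rwa [hQ, ENNReal.toReal_ofReal (ge_of_tendsto' hL fun _ => norm_nonneg _)]

-- The paper's `⟨·,·⟩` is linear in the first argument: its `⟨Te, Se⟩` is `inner ℂ (S e) (T e)`.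
/-- For `T, S ∈ 𝒢` whose basis norms are negligible on `o(n)`-subsets of `Bₙ`, the limit
`lim_n (1/n) ∑_{e ∈ Bₙ} ⟨Te, Se⟩` exists and equals the inner product `⟨T,S⟩_𝒢` induced via the
polarization identity `⟨T,S⟩_𝒢 = (1/4) ∑_{k=0}^{3} i^k Q̃(T + i^k S)²` from the norm `Q̃` on `𝒢`.
(Here `⟨·,·⟩` is linear in the first argument, so `⟨Te,Se⟩ = inner (S e) (T e)` in Mathlib's
convention.) -/
theorem inner_G_eq_limit (T S : H2 →ₗ[ℂ] H2) (hTG : InG T) (hSG : InG S)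
    (hTD : NegligibleOn T) (hSD : NegligibleOn S) :
    Filter.Tendsto
      (fun n : ℕ => (1 / (n : ℂ)) * ∑ pr ∈ Bfin n,
        (inner ℂ (S (bvec n pr)) (T (bvec n pr)) : ℂ))
      atTop
      (nhds ((1 / 4) * ∑ k ∈ Finset.range 4,
        Complex.I ^ k * (((QQ ⇑(T + Complex.I ^ k • S)).toReal ^ 2 : ℝ) : ℂ))) := by
  have hlim (k : ℕ) : Tendsto (fun n => ‖sampleVec n (Bfin n) (T + I ^ k • S)‖) atTop
      (nhds (QQ ⇑(T + I ^ k • S)).toReal) :=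
    tendsto_norm_sampleVec_QQ (hTG.add (hSG.smul_of_norm_eq_one (by simp))) (hTD.add (hSD.smul _))
  simp_rw [← inner_sampleVec, inner_eq_quarter_sum_I_pow, ← map_smul, ← map_add]
  exact tendsto_const_nhds.mul (tendsto_finsetSum _ fun k _ =>
    tendsto_const_nhds.mul ((hlim k).pow 2).ofReal)
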